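/- Let S be a semigroup and a ∈ S. Then a has a Drazin inverse (b with ab = ba, a^m = a^{m+1}b for some m ≥ 1, and b = b²a) if and only if a is invertible along a^m for some m ≥ 1, and in that case the Drazin inverse equals the inverse of a along a^m. -/

import Mathlib

variable {S : Type*} [Semigroup S]

/-- `x` is below `y` in the L-preorder: `x ∈ S¹y`. -/
def lle (x y : S) : Prop := x = y ∨ ∃ s, x = s * y
/-- `x` is below `y` in the R-preorder: `x ∈ yS¹`. -/
def rle (x y : S) : Prop := x = y ∨ ∃ s, x = y * s
/-- Green's L relation: `S¹x = S¹y`. -/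
def lrel (x y : S) : Prop := lle x y ∧ lle y x
/-- Green's R relation: `xS¹ = yS¹`. -/
def rrel (x y : S) : Prop := rle x y ∧ rle y x
/-- Green's H relation. -/
def hrel (x y : S) : Prop := lrel x y ∧ rrel x y
/-- `b` is an inverse of `a` along `d`. -/
def invAlong (a d b : S) : Prop :=
  b * a * d = d ∧ d * a * b = d ∧ (∃ s, b = d * s) ∧ (∃ t, b = t * d)
/-- The H-class of `x`. -/
def hClass (x : S) : Set S := {y | hrel y x}
/-- A subset of `S` is a group under the restricted multiplication. -/
def isGroupSet (H : Set S) : Prop :=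
  (∀ x ∈ H, ∀ y ∈ H, x * y ∈ H) ∧
  ∃ e ∈ H, (∀ x ∈ H, e * x = x ∧ x * e = x) ∧ ∀ x ∈ H, ∃ y ∈ H, x * y = e ∧ y * x = e

/-- `spow a n = a ^ (n + 1)` in the semigroup `S`. -/
def spow (a : S) : ℕ → S
  | 0 => a
  | n + 1 => spow a n * a

/-- `b` is a Drazin inverse of `a`: `ab = ba`, `b = b²a`, `a^m = a^{m+1} b` for some `m ≥ 1`. -/
def isDrazin (a b : S) : Prop :=
  a * b = b * a ∧ b = b * b * a ∧ ∃ m : ℕ, spow a m = spow a (m + 1) * b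

/-! If `b` is a Drazin inverse of `a`, then `ab = b^{n+1} a^{n+1}` for every `n`, so `b = b·ab`
lies in both `a^{m+1} S` and `S a^{m+1}`; conversely an inverse of `a` along a power of `a`
commutes with `a` because that power does, and is then a Drazin inverse. Uniqueness: for two
Drazin inverses `b`, `c` the idempotents `ab` and `ac` absorb each other, hence are equal, and
`b = bab = bac = cac = c`. -/

theorem Commute.spow_left {a b : S} (h : Commute a b) (n : ℕ) : Commute (spow a n) b := by
  induction n with
  | zero => exact h
  | succ n ih => exact ih.mul_left h

theorem Commute.spow_right {a b : S} (h : Commute a b) (n : ℕ) : Commute a (spow b n) :=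
  (h.symm.spow_left n).symm

theorem Commute.self_spow (a : S) (n : ℕ) : Commute a (spow a n) :=
  (Commute.refl a).spow_right n

namespace isDrazin

variable {a b c : S}

theorem commute (h : isDrazin a b) : Commute a b := h.1

theorem mul_mul_self (h : isDrazin a b) : b * a * b = b := by
  rw [mul_assoc, h.commute.eq, ← mul_assoc, ← h.2.1]

theorem isIdempotentElem (h : isDrazin a b) : IsIdempotentElem (a * b) := by
  rw [IsIdempotentElem, mul_assoc, ← mul_assoc b, h.mul_mul_self]

theorem mul_eq_spow_mul_spow (h : isDrazin a b) (n : ℕ) : a * b = spow b n * spow a n := by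
  induction n with
  | zero => exact h.commute.eq
  | succ n ih =>
    calc a * b = a * b * (b * a) := by rw [← h.commute.eq, h.isIdempotentElem.eq]
      _ = spow b n * spow a n * (b * a) := by rw [← ih]
      _ = spow b n * b * (spow a n * a) := by
        rw [mul_assoc, (h.commute.spow_left n).left_comm, ← mul_assoc]

theorem mul_eq_spow_mul_spow' (h : isDrazin a b) (n : ℕ) : a * b = spow a n * spow b n :=
  (h.mul_eq_spow_mul_spow n).trans ((h.commute.spow_left n).spow_right n).eq.symm

theorem exists_spow_mul_mul_self (h : isDrazin a b) : ∃ k, spow a k * (a * b) = spow a k := by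
  obtain ⟨-, -, k, hk⟩ := h
  exact ⟨k, by rw [← mul_assoc]; exact hk.symm⟩

theorem mul_eq_mul (hb : isDrazin a b) (hc : isDrazin a c) : a * b = a * c := by
  obtain ⟨k, hk⟩ := hc.exists_spow_mul_mul_self
  obtain ⟨l, hl⟩ := hb.exists_spow_mul_mul_self
  have hbc : a * b * (a * c) = a * b := by
    rw [hb.mul_eq_spow_mul_spow k, mul_assoc, hk]
  have hcb : a * b * (a * c) = a * c := by
    have hab : Commute (a * b) (spow a l) := ((Commute.refl a).mul_left hb.commute.symm).spow_right l
    rw [hc.mul_eq_spow_mul_spow' l, ← mul_assoc, hab.eq, hl]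
  exact hbc.symm.trans hcb

theorem unique (hb : isDrazin a b) (hc : isDrazin a c) : b = c :=
  calc b = b * a * b := hb.mul_mul_self.symm
    _ = b * a * c := by rw [mul_assoc, mul_assoc, hb.mul_eq_mul hc]
    _ = c * a * c := by rw [← hb.commute.eq, hb.mul_eq_mul hc, hc.commute.eq]
    _ = c := hc.mul_mul_self

theorem exists_invAlong_spow (h : isDrazin a b) : ∃ m, invAlong a (spow a m) b := by
  obtain ⟨m, hm⟩ := h.exists_spow_mul_mul_self
  have hab : Commute (a * b) a := (Commute.refl a).mul_left h.commute.symm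
  refine ⟨m, ?_, by rwa [mul_assoc], ⟨spow b m * b, ?_⟩, ⟨b * spow b m, ?_⟩⟩
  · rw [← h.commute.eq, (hab.spow_right m).eq, hm]
  · calc b = a * b * b := by rw [h.commute.eq, h.mul_mul_self]
      _ = spow a m * (spow b m * b) := by rw [h.mul_eq_spow_mul_spow' m, mul_assoc]
  · calc b = b * (a * b) := by rw [← mul_assoc, h.mul_mul_self]
      _ = b * spow b m * spow a m := by rw [h.mul_eq_spow_mul_spow m, mul_assoc]

end isDrazin

namespace invAlong

variable {a d c : S}

theorem mul_mul_self (h : invAlong a d c) : c * a * c = c := by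
  obtain ⟨hcad, -, ⟨s, rfl⟩, -⟩ := h
  rw [← mul_assoc, hcad]

theorem commute (h : invAlong a d c) (had : Commute a d) : Commute a c := by
  obtain ⟨hcad, hdac, ⟨s, hs⟩, ⟨t, ht⟩⟩ := h
  have hac : a * c = d * a * s := by rw [hs, ← mul_assoc, had.eq]
  have hca : c * a = t * (a * d) := by rw [ht, mul_assoc, had.eq]
  have hl : c * a * (d * a) = d * a := by rw [← mul_assoc, hcad]
  have hr : a * d * (a * c) = a * d := by rw [mul_assoc, ← mul_assoc d, hdac]
  calc a * c = c * a * (d * a) * s := by rw [hl, hac]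
    _ = c * a * (a * c) := by rw [hac, mul_assoc (c * a)]
    _ = t * (a * d) := by rw [hca, mul_assoc, hr]
    _ = c * a := hca.symm

theorem isDrazin {m : ℕ} (h : invAlong a (spow a m) c) : isDrazin a c := by
  have hac : Commute a c := h.commute (Commute.self_spow a m)
  refine ⟨hac, ?_, m + 1, ?_⟩
  · calc c = c * a * c := h.mul_mul_self.symm
      _ = c * c * a := by rw [mul_assoc, hac.eq, ← mul_assoc]
  · show spow a m * a = spow a m * a * a * c
    calc spow a m * a = spow a m * a * c * a := by rw [h.2.1]
      _ = spow a m * a * a * c := by rw [mul_assoc (spow a m * a) c, ← hac.eq, ← mul_assoc]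

end invAlong

theorem stmt14 (a : S) :
    ((∃ b, isDrazin a b) ↔ (∃ (m : ℕ) (b : S), invAlong a (spow a m) b)) ∧
    (∀ (b : S) (m : ℕ) (c : S), isDrazin a b → invAlong a (spow a m) c → b = c) := by
  refine ⟨⟨?_, fun ⟨m, c, hc⟩ => ⟨c, hc.isDrazin⟩⟩, fun b m c hb hc => hb.unique hc.isDrazin⟩
  rintro ⟨b, hb⟩
  obtain ⟨m, hm⟩ := hb.exists_invAlong_spow
  exact ⟨m, b, hm⟩
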